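/- arXiv:0710.2616 — 2 statements merged into one kernel-verified Lean document; each statement's English description precedes it below -/
import Mathlib

section
/- Let f : ℝⁿ → ℝ (n ≥ 2) be a C³ function and φ : ℝⁿ → ℝ a function such that the Hessian of f satisfies Hess f(x) = φ(x) · Id for all x. Then φ is constant. -/
open Real

theorem hessian_proportional_to_id_implies_phi_constant
    (n : ℕ) (hn : 2 ≤ n)
    (f φ : EuclideanSpace ℝ (Fin n) → ℝ)
    (hf : ContDiff ℝ 3 f)
    (hHess : ∀ x v w, fderiv ℝ (fderiv ℝ f) x v w
      = φ x * (inner ℝ v w : ℝ)) :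
    ∀ x y, φ x = φ y := by
  classical
  have hg : ContDiff ℝ 2 (fderiv ℝ f) := hf.fderiv_right (by norm_num)
  have hh : ContDiff ℝ 1 (fderiv ℝ (fderiv ℝ f)) := hg.fderiv_right (by norm_num)
  have hhd : Differentiable ℝ (fderiv ℝ (fderiv ℝ f)) := hh.differentiable (by norm_num)
  set h := fderiv ℝ (fderiv ℝ f) with hhdef
  set T := fderiv ℝ h with hTdef
  -- basis vectors
  have h0 : (0 : ℕ) < n := by omega
  have h1 : (1 : ℕ) < n := by omega
  set e₀ : EuclideanSpace ℝ (Fin n) := EuclideanSpace.single ⟨0, h0⟩ 1 with he0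
  set e₁ : EuclideanSpace ℝ (Fin n) := EuclideanSpace.single ⟨1, h1⟩ 1 with he1
  have hinner : ∀ (i j : Fin n),
      (inner ℝ (EuclideanSpace.single i (1:ℝ)) (EuclideanSpace.single j (1:ℝ)) : ℝ)
        = if i = j then 1 else 0 := by
    intro i j
    rw [EuclideanSpace.inner_single_left]
    simp [EuclideanSpace.single_apply, eq_comm]
  -- derivative of x ↦ h x v w
  have key : ∀ (x v w : EuclideanSpace ℝ (Fin n)), HasFDerivAt (fun y => h y v w)
      (((ContinuousLinearMap.apply ℝ ℝ w).comp
        (ContinuousLinearMap.apply ℝ (EuclideanSpace ℝ (Fin n) →L[ℝ] ℝ) v)).comp (T x)) x := by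
    intro x v w
    have hd := ((hhd x).hasFDerivAt.clm_apply (hasFDerivAt_const v x)).clm_apply
      (hasFDerivAt_const w x)
    convert hd using 1
    all_goals try rfl
    ext u
    simp [hTdef]
  -- φ = fun x => h x e₀ e₀
  have hφeq : φ = fun x => h x e₀ e₀ := by
    funext x
    rw [hhdef, hHess x e₀ e₀, he0, hinner]
    simp
  have hφdiff : ∀ x : EuclideanSpace ℝ (Fin n), HasFDerivAt φ
      (((ContinuousLinearMap.apply ℝ ℝ e₀).comp
        (ContinuousLinearMap.apply ℝ (EuclideanSpace ℝ (Fin n) →L[ℝ] ℝ) e₀)).comp (T x)) x := by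
    intro x; rw [hφeq]; exact key x e₀ e₀
  have hφd : Differentiable ℝ φ := fun x => (hφdiff x).differentiableAt
  -- T x u v w = fderiv φ x u * ⟪v, w⟫
  have hT : ∀ (x u v w : EuclideanSpace ℝ (Fin n)),
      T x u v w = fderiv ℝ φ x u * (inner ℝ v w : ℝ) := by
    intro x u v w
    have h1' : HasFDerivAt (fun y => h y v w)
        ((inner ℝ v w : ℝ) • fderiv ℝ φ x) x := by
      have heq : (fun y => h y v w) = fun y => φ y * (inner ℝ v w : ℝ) := by
        funext y; rw [hhdef]; exact hHess y v w
      rw [heq]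
      simpa [smul_eq_mul, mul_comm] using ((hφd x).hasFDerivAt).mul_const (inner ℝ v w : ℝ)
    have h2' := key x v w
    have heq2 := h1'.unique h2'
    have := congrFun (congrArg
      (fun (L : EuclideanSpace ℝ (Fin n) →L[ℝ] ℝ) => (L : EuclideanSpace ℝ (Fin n) → ℝ)) heq2) u
    simp only [ContinuousLinearMap.coe_smul', Pi.smul_apply, smul_eq_mul,
      ContinuousLinearMap.coe_comp', Function.comp_apply,
      ContinuousLinearMap.apply_apply] at this
    rw [← this, mul_comm]
  -- symmetry of T x in its first two arguments
  have hsym : ∀ (x u v w : EuclideanSpace ℝ (Fin n)), T x u v w = T x v u w := by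
    intro x u v w
    have hs : IsSymmSndFDerivAt ℝ (fderiv ℝ f) x :=
      hg.contDiffAt.isSymmSndFDerivAt (by simp)
    have hsv := hs u v
    rw [hTdef, hhdef]
    exact congrFun (congrArg
      (fun (L : EuclideanSpace ℝ (Fin n) →L[ℝ] ℝ) => (L : EuclideanSpace ℝ (Fin n) → ℝ)) hsv) w
  -- fderiv φ vanishes
  have hzero : ∀ x : EuclideanSpace ℝ (Fin n), fderiv ℝ φ x = 0 := by
    intro x
    have hc : ∀ (u e : EuclideanSpace ℝ (Fin n)), fderiv ℝ φ x u * (inner ℝ e e : ℝ)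
        = fderiv ℝ φ x e * (inner ℝ u e : ℝ) := by
      intro u e
      rw [← hT x u e e, hsym x u e e, hT x e u e]
    have he00 : (inner ℝ e₀ e₀ : ℝ) = 1 := by rw [he0, hinner]; simp
    have he11 : (inner ℝ e₁ e₁ : ℝ) = 1 := by rw [he1, hinner]; simp
    have he01 : (inner ℝ e₀ e₁ : ℝ) = 0 := by
      rw [he0, he1, hinner]
      have hne : (⟨0, h0⟩ : Fin n) ≠ ⟨1, h1⟩ := by simp [Fin.ext_iff]
      simp [hne]
    have hc0 : fderiv ℝ φ x e₀ = 0 := by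
      have := hc e₀ e₁
      rw [he11, he01] at this
      simpa using this
    ext u
    have := hc u e₀
    rw [he00, hc0] at this
    simpa using this
  intro x y
  exact is_const_of_fderiv_eq_zero hφd hzero x y
end

section
/- Let f : ℝⁿ → ℝ (n ≥ 2) be C³ with Hess f(x) = φ(x)·Id and f non-constant. If f has a critical point x₀ (∇f(x₀) = 0), then with c = φ(x₀) one has c ≠ 0 or f is constant; assuming c ≠ 0, f(x) = (c/2)‖x - x₀‖² + f(x₀), and every level set {f = a} with a ≠ f(x₀) (and (a - f(x₀))/c > 0) is a Euclidean sphere centered at x₀. -/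
open Real Set

lemma aux_quadratic_formula {E : Type*} [NormedAddCommGroup E] [InnerProductSpace ℝ E]
    [CompleteSpace E]
    (f φ : E → ℝ) (hf : ContDiff ℝ 3 f)
    (hHess : ∀ x v w, fderiv ℝ (fderiv ℝ f) x v w = φ x * (inner ℝ v w : ℝ))
    (e0 e1 : E) (hee0 : (inner ℝ e0 e0 : ℝ) = 1) (hee1 : (inner ℝ e1 e1 : ℝ) = 1)
    (he01 : (inner ℝ e0 e1 : ℝ) = 0)
    (x₀ : E) (hx₀ : gradient f x₀ = 0) :
    ∀ x, f x = (φ x₀ / 2) * ‖x - x₀‖ ^ 2 + f x₀ := by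
  have h2 : ContDiff ℝ 2 (fderiv ℝ f) := hf.fderiv_right (by norm_num)
  have h1 : ContDiff ℝ 1 (fderiv ℝ (fderiv ℝ f)) := h2.fderiv_right (by norm_num)
  have hdf : Differentiable ℝ (fderiv ℝ f) := h2.differentiable (by norm_num)
  have hd2f : Differentiable ℝ (fderiv ℝ (fderiv ℝ f)) := h1.differentiable (by norm_num)
  -- third derivative symmetry in first two slots
  have hsym : ∀ (x u v : E), fderiv ℝ (fderiv ℝ (fderiv ℝ f)) x u v
      = fderiv ℝ (fderiv ℝ (fderiv ℝ f)) x v u := fun x u v =>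
    second_derivative_symmetric (fun y => (hdf y).hasFDerivAt) ((hd2f x).hasFDerivAt) u v
  -- evaluation CLM
  let T : ∀ (_v _w : E), (E →L[ℝ] E →L[ℝ] ℝ) →L[ℝ] ℝ := fun v w =>
    (ContinuousLinearMap.apply ℝ ℝ w).comp (ContinuousLinearMap.apply ℝ (E →L[ℝ] ℝ) v)
  have hT : ∀ v w (L : E →L[ℝ] E →L[ℝ] ℝ), T v w L = L v w := fun _ _ _ => rfl
  -- derivative of (x ↦ D²f x v w) along u is D³f x u v w
  have hev : ∀ (x v w : E), HasFDerivAt (fun y => fderiv ℝ (fderiv ℝ f) y v w)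
      ((T v w).comp (fderiv ℝ (fderiv ℝ (fderiv ℝ f)) x)) x := by
    intro x v w
    have h := ((hd2f x).hasFDerivAt.clm_apply (hasFDerivAt_const v x)).clm_apply
      (hasFDerivAt_const w x)
    convert h using 1
    · rfl
    · rfl
    · ext u; simp [T]
  -- φ as composition, differentiability
  have hφeq : φ = fun x => fderiv ℝ (fderiv ℝ f) x e0 e0 := by
    funext x; rw [hHess x e0 e0, hee0, mul_one]
  have hφdiff : Differentiable ℝ φ := by
    rw [hφeq]
    intro x
    have h := ((hd2f x).clm_apply (differentiableAt_const e0)).clm_apply (differentiableAt_const e0)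
    exact h
  have hφfderiv : ∀ x u, fderiv ℝ φ x u = fderiv ℝ (fderiv ℝ (fderiv ℝ f)) x u e0 e0 := by
    intro x u
    rw [hφeq, (hev x e0 e0).fderiv]
    rfl
  -- key identity : D³f x u v w = (Dφ x u) ⟨v,w⟩
  have hkey : ∀ (x u v w : E), fderiv ℝ (fderiv ℝ (fderiv ℝ f)) x u v w
      = fderiv ℝ φ x u * (inner ℝ v w : ℝ) := by
    intro x u v w
    have heq : (fun y => fderiv ℝ (fderiv ℝ f) y v w)
        = fun y => φ y * (inner ℝ v w : ℝ) := funext fun y => hHess y v w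
    have h1' : HasFDerivAt (fun y => φ y * (inner ℝ v w : ℝ))
        ((inner ℝ v w : ℝ) • fderiv ℝ φ x) x := (hφdiff x).hasFDerivAt.mul_const _
    have h2' := hev x v w
    rw [heq] at h2'
    have h3 := h1'.unique h2'
    have h4 := congrFun (congrArg DFunLike.coe h3) u
    simp only [ContinuousLinearMap.smul_apply, smul_eq_mul] at h4
    rw [← hT v w, ← ContinuousLinearMap.comp_apply, ← h4, mul_comm]
  -- Dφ = 0 everywhere
  have hφ0 : ∀ x u, fderiv ℝ φ x u = 0 := by
    intro x u
    have hA : fderiv ℝ φ x e0 = 0 := by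
      have h := hkey x e0 e1 e1
      rw [hsym x e0 e1, hkey x e1 e0 e1, he01, mul_zero, hee1, mul_one] at h
      exact h.symm
    have h := hkey x u e0 e0
    rw [hsym x u e0, hkey x e0 u e0, hA, zero_mul, hee0, mul_one] at h
    exact h.symm
  have hφconst : ∀ x, φ x = φ x₀ := by
    intro x
    exact is_const_of_fderiv_eq_zero hφdiff
      (fun y => ContinuousLinearMap.ext fun u => by rw [hφ0 y u]; rfl) x x₀
  set c := φ x₀ with hc
  -- fderiv f x₀ = 0
  have hfx₀ : fderiv ℝ f x₀ = 0 := by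
    have h : (InnerProductSpace.toDual ℝ E).symm (fderiv ℝ f x₀) = 0 := hx₀
    rwa [LinearIsometryEquiv.map_eq_zero_iff] at h
  -- real inner product as a continuous bilinear map
  let B : E →L[ℝ] E →L[ℝ] ℝ := LinearMap.mkContinuous₂ (innerₗ E) 1 fun x y => by
    rw [one_mul]; exact norm_inner_le_norm x y
  have hB : ∀ u v : E, B u v = (inner ℝ u v : ℝ) := fun _ _ => rfl
  -- the gradient field G
  set G : E → (E →L[ℝ] ℝ) := fun x => fderiv ℝ f x - (c • B) (x - x₀) with hG
  have hlin : ∀ x : E, HasFDerivAt (fun y : E => (c • B) (y - x₀)) (c • B) x := by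
    intro x
    have h : (fun y : E => (c • B) (y - x₀))
        = fun y : E => (c • B) y - (c • B) x₀ :=
      funext fun y => map_sub _ y x₀
    rw [h]
    exact ((c • B).hasFDerivAt).sub_const _
  have hGd : ∀ x, HasFDerivAt G (fderiv ℝ (fderiv ℝ f) x - c • B) x :=
    fun x => ((hdf x).hasFDerivAt).sub (hlin x)
  have hG0 : ∀ x, HasFDerivAt G (0 : E →L[ℝ] E →L[ℝ] ℝ) x := by
    intro x
    have hz : fderiv ℝ (fderiv ℝ f) x - c • B = 0 := by
      ext u v
      have h : fderiv ℝ (fderiv ℝ f) x u v - c * (inner ℝ u v : ℝ) = 0 := by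
        rw [hHess x u v, hφconst x]; ring
      simpa [ContinuousLinearMap.sub_apply, ContinuousLinearMap.smul_apply,
        smul_eq_mul, hB] using h
    rw [← hz]; exact hGd x
  have hGconst : ∀ x, G x = G x₀ :=
    fun x => is_const_of_fderiv_eq_zero (fun y => (hG0 y).differentiableAt)
      (fun y => (hG0 y).fderiv) x x₀
  have hGval : ∀ x, fderiv ℝ f x = (c • B) (x - x₀) := by
    intro x
    have h := hGconst x
    rw [hG] at h
    simp only [sub_self, map_zero, hfx₀, sub_zero, zero_sub] at h
    exact sub_eq_zero.mp h
  -- the function g = f - (c/2)‖·-x₀‖²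
  have hq : ∀ x : E, HasFDerivAt (fun y : E => ‖y - x₀‖ ^ 2)
      (2 • (innerSL ℝ (E := E) (x - x₀))) x := by
    intro x
    have h := ((hasFDerivAt_id x).sub_const x₀).norm_sq
    simpa using h
  have hgd : ∀ x : E, HasFDerivAt (fun y : E => f y - (c / 2) * ‖y - x₀‖ ^ 2)
      (0 : E →L[ℝ] ℝ) x := by
    intro x
    have h := ((hf.differentiable (by norm_num) x).hasFDerivAt).sub
      (((hq x).const_mul (c / 2)))
    have hz : fderiv ℝ f x - (c / 2) • (2 • innerSL ℝ (E := E) (x - x₀)) = 0 := by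
      rw [hGval x]
      ext u
      simp only [ContinuousLinearMap.sub_apply, ContinuousLinearMap.smul_apply,
        ContinuousLinearMap.zero_apply, innerSL_apply_apply, smul_eq_mul, two_smul,
        ContinuousLinearMap.add_apply, hB]
      ring
    rw [← hz]; exact h
  intro x
  have h := is_const_of_fderiv_eq_zero
    (f := fun y : E => f y - (c / 2) * ‖y - x₀‖ ^ 2)
    (fun y => (hgd y).differentiableAt) (fun y => (hgd y).fderiv) x x₀
  simp only [sub_self, norm_zero] at h
  have h' : f x - c / 2 * ‖x - x₀‖ ^ 2 = f x₀ := by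
    rw [h]; ring_nf
  linarith

theorem critical_point_levels_are_spheres
    (n : ℕ) (hn : 2 ≤ n)
    (f φ : EuclideanSpace ℝ (Fin n) → ℝ)
    (hf : ContDiff ℝ 3 f)
    (hHess : ∀ x v w, fderiv ℝ (fderiv ℝ f) x v w
      = φ x * (inner ℝ v w : ℝ))
    (hnc : ¬ ∃ k : ℝ, ∀ x, f x = k)
    (x₀ : EuclideanSpace ℝ (Fin n))
    (hx₀ : gradient f x₀ = 0) :
    φ x₀ ≠ 0 ∧
    (∀ x, f x = (φ x₀ / 2) * ‖x - x₀‖ ^ 2 + f x₀) ∧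
    (∀ a : ℝ, a ≠ f x₀ → 0 < (a - f x₀) / φ x₀ →
      {x | f x = a}
        = Metric.sphere x₀ (Real.sqrt (2 * (a - f x₀) / φ x₀))) := by
  have h0n : (0 : ℕ) < n := by omega
  have h1n : (1 : ℕ) < n := by omega
  set e0 : EuclideanSpace ℝ (Fin n) := EuclideanSpace.single ⟨0, h0n⟩ (1:ℝ) with he0
  set e1 : EuclideanSpace ℝ (Fin n) := EuclideanSpace.single ⟨1, h1n⟩ (1:ℝ) with he1
  have hee0 : (inner ℝ e0 e0 : ℝ) = 1 := by
    rw [he0, EuclideanSpace.inner_single_left]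
    simp [EuclideanSpace.single_apply]
  have hee1 : (inner ℝ e1 e1 : ℝ) = 1 := by
    rw [he1, EuclideanSpace.inner_single_left]
    simp [EuclideanSpace.single_apply]
  have he01 : (inner ℝ e0 e1 : ℝ) = 0 := by
    rw [he0, he1, EuclideanSpace.inner_single_left]
    simp [EuclideanSpace.single_apply]
  have hformula := aux_quadratic_formula f φ hf hHess e0 e1 hee0 hee1 he01 x₀ hx₀
  have hcne : φ x₀ ≠ 0 := by
    intro h0
    exact hnc ⟨f x₀, fun x => by rw [hformula x, h0]; ring⟩
  refine ⟨hcne, hformula, ?_⟩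
  intro a ha hpos
  ext x
  simp only [mem_setOf_eq, Metric.mem_sphere, dist_eq_norm]
  have hs : (0:ℝ) < 2 * (a - f x₀) / φ x₀ := by
    have h : 2 * (a - f x₀) / φ x₀ = 2 * ((a - f x₀) / φ x₀) := by ring
    rw [h]; linarith
  constructor
  · intro hfx
    have h : ‖x - x₀‖ ^ 2 = 2 * (a - f x₀) / φ x₀ := by
      rw [hformula x] at hfx
      field_simp at hfx ⊢
      linarith
    rw [← Real.sqrt_sq (norm_nonneg (x - x₀)), h]
  · intro hr
    rw [hformula x, hr, Real.sq_sqrt hs.le]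
    field_simp
    ring
end
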